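/- arXiv:1901.09907 — 8 statements merged into one kernel-verified Lean document; each statement's English description precedes it below -/
import Mathlib

section
/- If f : [a,b] ⊆ (0,∞) → ℝ is p-convex (p ≠ 0), then its p-symmetrical transform P_{(f;p)}(x) = (1/2)[f(x) + f((a^p + b^p - x^p)^(1/p))] is also p-convex on [a,b]. -/
noncomputable section
open Real Set MeasureTheory intervalIntegral

/-- `f` is p-convex on `[a,b]`. -/
def PConvexOn (p a b : ℝ) (f : ℝ → ℝ) : Prop :=
  ∀ x ∈ Set.Icc a b, ∀ y ∈ Set.Icc a b, ∀ t ∈ Set.Icc (0:ℝ) 1,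
    f ((t * x ^ p + (1 - t) * y ^ p) ^ (1/p)) ≤ t * f x + (1 - t) * f y

/-- The p-symmetrical transform of `f` on `[a,b]`. -/
def PSym (p a b : ℝ) (f : ℝ → ℝ) : ℝ → ℝ :=
  fun x => (f x + f ((a ^ p + b ^ p - x ^ p) ^ (1/p))) / 2

lemma rpow_inv_rpow' (p : ℝ) (hp : p ≠ 0) {c : ℝ} (hc : 0 < c) :
    (c ^ (1/p)) ^ p = c := by
  rw [← Real.rpow_mul hc.le, one_div_mul_cancel hp, Real.rpow_one]

lemma rpow_rpow_inv' (p : ℝ) (hp : p ≠ 0) {c : ℝ} (hc : 0 < c) :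
    (c ^ p) ^ (1/p) = c := by
  rw [← Real.rpow_mul hc.le, mul_one_div_cancel hp, Real.rpow_one]

lemma refl_mem (p a b : ℝ) (hp : p ≠ 0) (ha : 0 < a) (hab : a < b)
    {x : ℝ} (hx : x ∈ Set.Icc a b) :
    0 < a ^ p + b ^ p - x ^ p ∧ (a ^ p + b ^ p - x ^ p) ^ (1/p) ∈ Set.Icc a b := by
  have hb : (0:ℝ) < b := ha.trans hab
  have hx0 : 0 < x := lt_of_lt_of_le ha hx.1
  rcases lt_or_gt_of_ne hp with hneg | hpos
  · -- p < 0 : rpow antitone in the base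
    have h1 : x ^ p ≤ a ^ p := Real.rpow_le_rpow_of_nonpos ha hx.1 hneg.le
    have h2 : b ^ p ≤ x ^ p := Real.rpow_le_rpow_of_nonpos hx0 hx.2 hneg.le
    have hbp : 0 < b ^ p := Real.rpow_pos_of_pos hb p
    have hc : 0 < a ^ p + b ^ p - x ^ p := by linarith
    have hinv : (1:ℝ)/p ≤ 0 := by
      apply div_nonpos_of_nonneg_of_nonpos <;> linarith
    refine ⟨hc, ?_, ?_⟩
    · have hle : a ^ p + b ^ p - x ^ p ≤ a ^ p := by linarith
      have := Real.rpow_le_rpow_of_nonpos hc hle hinv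
      rwa [rpow_rpow_inv' p hp ha] at this
    · have hle : b ^ p ≤ a ^ p + b ^ p - x ^ p := by linarith
      have := Real.rpow_le_rpow_of_nonpos hbp hle hinv
      rwa [rpow_rpow_inv' p hp hb] at this
  · -- p > 0 : rpow monotone in the base
    have h1 : a ^ p ≤ x ^ p := Real.rpow_le_rpow ha.le hx.1 hpos.le
    have h2 : x ^ p ≤ b ^ p := Real.rpow_le_rpow hx0.le hx.2 hpos.le
    have hap : 0 < a ^ p := Real.rpow_pos_of_pos ha p
    have hc : 0 < a ^ p + b ^ p - x ^ p := by linarith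
    have hinv : (0:ℝ) ≤ 1/p := by positivity
    refine ⟨hc, ?_, ?_⟩
    · have hle : a ^ p ≤ a ^ p + b ^ p - x ^ p := by linarith
      have := Real.rpow_le_rpow hap.le hle hinv
      rwa [rpow_rpow_inv' p hp ha] at this
    · have hle : a ^ p + b ^ p - x ^ p ≤ b ^ p := by linarith
      have := Real.rpow_le_rpow hc.le hle hinv
      rwa [rpow_rpow_inv' p hp hb] at this

theorem psym_pconvex (p a b : ℝ) (hp : p ≠ 0) (ha : 0 < a) (hab : a < b)
    (f : ℝ → ℝ) (hf : PConvexOn p a b f) :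
    PConvexOn p a b (PSym p a b f) := by
  intro x hx y hy t ht
  have hx0 : 0 < x := lt_of_lt_of_le ha hx.1
  have hy0 : 0 < y := lt_of_lt_of_le ha hy.1
  obtain ⟨hcx, hxr⟩ := refl_mem p a b hp ha hab hx
  obtain ⟨hcy, hyr⟩ := refl_mem p a b hp ha hab hy
  have hxp : 0 < x ^ p := Real.rpow_pos_of_pos hx0 p
  have hyp : 0 < y ^ p := Real.rpow_pos_of_pos hy0 p
  -- positivity of the convex combination
  have hs : 0 < t * x ^ p + (1 - t) * y ^ p := by
    rcases le_total (x ^ p) (y ^ p) with h | h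
    · nlinarith [ht.1, ht.2]
    · nlinarith [ht.1, ht.2]
  -- the two convexity inequalities
  have h1 := hf x hx y hy t ht
  have h2 := hf _ hxr _ hyr t ht
  -- rewrite the reflected p-means
  have hxr_pow : ((a ^ p + b ^ p - x ^ p) ^ (1/p)) ^ p = a ^ p + b ^ p - x ^ p :=
    rpow_inv_rpow' p hp hcx
  have hyr_pow : ((a ^ p + b ^ p - y ^ p) ^ (1/p)) ^ p = a ^ p + b ^ p - y ^ p :=
    rpow_inv_rpow' p hp hcy
  have hz_pow : ((t * x ^ p + (1 - t) * y ^ p) ^ (1/p)) ^ p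
      = t * x ^ p + (1 - t) * y ^ p := rpow_inv_rpow' p hp hs
  simp only [PSym]
  rw [hz_pow]
  have harg : a ^ p + b ^ p - (t * x ^ p + (1 - t) * y ^ p)
      = t * ((a ^ p + b ^ p - x ^ p) ^ (1/p)) ^ p
        + (1 - t) * ((a ^ p + b ^ p - y ^ p) ^ (1/p)) ^ p := by
    rw [hxr_pow, hyr_pow]; ring
  rw [harg]
  linarith
end
end

section
/- Let 0 < a < b, α ≥ 2 and p > 0. The function f(x) = (x^p - a^p)^(α-1) + (b^p - x^p)^(α-1) is symmetrized p-convex on [a,b]. -/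
noncomputable section
open Real Set MeasureTheory intervalIntegral

/-! The substitution `u = x ^ p` maps `[a, b]` onto `[a ^ p, b ^ p]`, turns p-convexity into
ordinary convexity and the p-symmetrical transform into the reflection `u ↦ a ^ p + b ^ p - u`.
In the variable `u` the function is `(u - a ^ p) ^ (α - 1) + (b ^ p - u) ^ (α - 1)`, which is
invariant under that reflection and convex since `α - 1 ≥ 1`. -/

lemma convexOn_rpow_sub_const {β : ℝ} (hβ : 1 ≤ β) (c : ℝ) :
    ConvexOn ℝ (Ici c) (fun u => (u - c) ^ β) := by
  have h := (convexOn_rpow hβ).comp_affineMap (AffineMap.id ℝ ℝ - AffineMap.const ℝ ℝ c)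
  refine (h.subset (fun u hu => ?_) (convex_Ici c)).congr fun u _ => ?_
  · simpa using hu
  · simp

lemma convexOn_const_sub_rpow {β : ℝ} (hβ : 1 ≤ β) (c : ℝ) :
    ConvexOn ℝ (Iic c) (fun u => (c - u) ^ β) := by
  have h := (convexOn_rpow hβ).comp_affineMap (AffineMap.const ℝ ℝ c - AffineMap.id ℝ ℝ)
  refine (h.subset (fun u hu => ?_) (convex_Iic c)).congr fun u _ => ?_
  · simpa using hu
  · simp

lemma convexOn_rpow_sub_add_const_sub_rpow {β : ℝ} (hβ : 1 ≤ β) (A B : ℝ) :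
    ConvexOn ℝ (Icc A B) (fun u => (u - A) ^ β + (B - u) ^ β) :=
  ((convexOn_rpow_sub_const hβ A).subset Icc_subset_Ici_self (convex_Icc A B)).add
    ((convexOn_const_sub_rpow hβ B).subset Icc_subset_Iic_self (convex_Icc A B))

lemma rpow_mem_Icc_rpow {p a b x : ℝ} (hp : 0 ≤ p) (ha : 0 ≤ a) (hx : x ∈ Icc a b) :
    x ^ p ∈ Icc (a ^ p) (b ^ p) :=
  ⟨rpow_le_rpow ha hx.1 hp, rpow_le_rpow (ha.trans hx.1) hx.2 hp⟩

theorem PConvexOn.of_convexOn_comp_rpow_one_div {p a b : ℝ} {F : ℝ → ℝ} (hp : 0 < p)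
    (ha : 0 ≤ a) (hF : ConvexOn ℝ (Icc (a ^ p) (b ^ p)) (fun u => F (u ^ (1 / p)))) :
    PConvexOn p a b F := by
  intro x hx y hy t ht
  have hx0 : 0 ≤ x := ha.trans hx.1
  have hy0 : 0 ≤ y := ha.trans hy.1
  have h := hF.2 (rpow_mem_Icc_rpow hp.le ha hx) (rpow_mem_Icc_rpow hp.le ha hy) ht.1
    (sub_nonneg.2 ht.2) (add_sub_cancel t 1)
  simpa only [smul_eq_mul, one_div, rpow_rpow_inv hx0 hp.ne', rpow_rpow_inv hy0 hp.ne'] using h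

lemma PSym_rpow_one_div {p a b u : ℝ} (F : ℝ → ℝ) (hp : p ≠ 0) (hu : 0 ≤ u) :
    PSym p a b F (u ^ (1 / p)) = (F (u ^ (1 / p)) + F ((a ^ p + b ^ p - u) ^ (1 / p))) / 2 := by
  rw [PSym, one_div, rpow_inv_rpow hu hp]

theorem symmetrized_pconvex_example_general (p a b α : ℝ) (hp : 0 < p) (ha : 0 < a)
    (hα : 2 ≤ α) :
    PConvexOn p a b
      (PSym p a b (fun x => (x ^ p - a ^ p) ^ (α - 1) + (b ^ p - x ^ p) ^ (α - 1))) := by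
  refine PConvexOn.of_convexOn_comp_rpow_one_div hp ha.le <|
    (convexOn_rpow_sub_add_const_sub_rpow (β := α - 1) (by linarith) _ _).congr fun u hu => ?_
  have hA : 0 ≤ a ^ p := rpow_nonneg ha.le p
  have hu0 : 0 ≤ u := hA.trans hu.1
  have hu' : 0 ≤ a ^ p + b ^ p - u := by linarith [hu.2]
  rw [PSym_rpow_one_div _ hp.ne' hu0, one_div, rpow_inv_rpow hu0 hp.ne',
    rpow_inv_rpow hu' hp.ne', show a ^ p + b ^ p - u - a ^ p = b ^ p - u by ring,
    show b ^ p - (a ^ p + b ^ p - u) = u - a ^ p by ring]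
  ring

theorem symmetrized_pconvex_example (p a b α : ℝ) (hp : 0 < p) (ha : 0 < a)
    (hab : a < b) (hα : 2 ≤ α) :
    PConvexOn p a b
      (PSym p a b (fun x => (x ^ p - a ^ p) ^ (α - 1) + (b ^ p - x ^ p) ^ (α - 1))) :=
  symmetrized_pconvex_example_general p a b α hp ha hα
end
end

section
/- Let f : [a,b] ⊆ (0,∞) → ℝ and g(x) = x^(1/p), p ≠ 0. Then f is symmetrized p-convex on [a,b] if and only if f ∘ g is symmetrized convex on the interval with endpoints a^p and b^p. -/
/-! The substitution `u = x ^ p` maps `[a, b]` monotonically onto the interval between `a ^ p`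
and `b ^ p` and turns p-means `(t x ^ p + (1 - t) y ^ p) ^ (1 / p)` into arithmetic means, so
`g` is p-convex exactly when `g ∘ (· ^ (1 / p))` is convex. Composing the p-symmetrical
transform of `f` with `(· ^ (1 / p))` gives the ordinary symmetrization of `f ∘ (· ^ (1 / p))`. -/

noncomputable section
open Real Set MeasureTheory intervalIntegral

lemma uIcc_subset_Ioi_of_pos {a b : ℝ} (ha : 0 < a) (hb : 0 < b) : uIcc a b ⊆ Ioi 0 :=
  fun _ hx => (lt_min ha hb).trans_le hx.1

lemma rpow_mapsTo_uIcc {a b : ℝ} (ha : 0 < a) (hb : 0 < b) (p : ℝ) :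
    MapsTo (fun x : ℝ => x ^ p) (uIcc a b) (uIcc (a ^ p) (b ^ p)) := by
  rw [mapsTo_iff_image_subset]
  have hsub := uIcc_subset_Ioi_of_pos ha hb
  rcases le_total 0 p with hp | hp
  · exact ((monotoneOn_rpow_Ici_of_exponent_nonneg hp).mono
      (hsub.trans Ioi_subset_Ici_self)).image_uIcc_subset
  · exact ((antitoneOn_rpow_Ioi_of_exponent_nonpos hp).mono hsub).image_uIcc_subset

lemma rpow_one_div_mapsTo_Icc {p a b : ℝ} (hp : p ≠ 0) (ha : 0 < a) (hab : a ≤ b) :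
    MapsTo (fun u : ℝ => u ^ (1 / p)) (uIcc (a ^ p) (b ^ p)) (Icc a b) := by
  have hb : 0 < b := ha.trans_le hab
  have h := rpow_mapsTo_uIcc (rpow_pos_of_pos ha p) (rpow_pos_of_pos hb p) (1 / p)
  rw [one_div] at h ⊢
  rwa [rpow_rpow_inv ha.le hp, rpow_rpow_inv hb.le hp, uIcc_of_le hab] at h

theorem pConvexOn_iff_convexOn_comp_rpow_one_div {p a b : ℝ} (hp : p ≠ 0) (ha : 0 < a)
    (hab : a ≤ b) (g : ℝ → ℝ) :
    PConvexOn p a b g ↔ ConvexOn ℝ (uIcc (a ^ p) (b ^ p)) (g ∘ fun u => u ^ (1 / p)) := by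
  have hb : 0 < b := ha.trans_le hab
  have hpos := uIcc_subset_Ioi_of_pos (rpow_pos_of_pos ha p) (rpow_pos_of_pos hb p)
  constructor
  · refine fun h => ⟨convex_uIcc _ _, fun u hu v hv s t hs ht hst => ?_⟩
    obtain rfl : t = 1 - s := by linarith
    have := h _ (rpow_one_div_mapsTo_Icc hp ha hab hu) _ (rpow_one_div_mapsTo_Icc hp ha hab hv)
      s ⟨hs, by linarith⟩
    simpa only [Function.comp_apply, smul_eq_mul, one_div, rpow_inv_rpow (hpos hu).le hp,
      rpow_inv_rpow (hpos hv).le hp] using this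
  · intro h x hx y hy t ht
    have hmaps := rpow_mapsTo_uIcc ha hb p
    have := h.2 (hmaps (Icc_subset_uIcc hx)) (hmaps (Icc_subset_uIcc hy)) ht.1
      (sub_nonneg.2 ht.2) (add_sub_cancel _ _)
    simpa only [Function.comp_apply, smul_eq_mul, one_div, rpow_rpow_inv (ha.trans_le hx.1).le hp,
      rpow_rpow_inv (ha.trans_le hy.1).le hp] using this

theorem symmetrized_pconvex_iff_symmetrized_convex (p a b : ℝ) (hp : p ≠ 0)
    (ha : 0 < a) (hab : a < b) (f : ℝ → ℝ) :
    PConvexOn p a b (PSym p a b f) ↔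
      ConvexOn ℝ (Set.uIcc (a ^ p) (b ^ p))
        (fun u => ((f ∘ fun z => z ^ (1/p)) u +
          (f ∘ fun z => z ^ (1/p)) (a ^ p + b ^ p - u)) / 2) := by
  have hpos := uIcc_subset_Ioi_of_pos (rpow_pos_of_pos ha p) (rpow_pos_of_pos (ha.trans hab) p)
  have hsym : EqOn (PSym p a b f ∘ fun u => u ^ (1 / p))
      (fun u => ((f ∘ fun z => z ^ (1/p)) u + (f ∘ fun z => z ^ (1/p)) (a ^ p + b ^ p - u)) / 2)
      (uIcc (a ^ p) (b ^ p)) := fun u hu => by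
    simp only [PSym, Function.comp_apply, one_div, rpow_inv_rpow (hpos hu).le hp]
  rw [pConvexOn_iff_convexOn_comp_rpow_one_div hp ha hab.le]
  exact ⟨fun h => h.congr hsym, fun h => h.congr hsym.symm⟩
end
end

section
/- If f : [a,b] ⊆ (0,∞) → ℝ is symmetrized p-convex and integrable on [a,b] (p ≠ 0), then f((((a^p + b^p)/2))^(1/p)) ≤ (p/(b^p - a^p)) ∫_a^b f(x)·x^(p-1) dx ≤ (f(a) + f(b))/2. -/
noncomputable section
open Real Set MeasureTheory intervalIntegral

/-!
The `p`-reflection `σ x = (a ^ p + b ^ p - x ^ p) ^ (1 / p)` is an involution of `[a, b]` that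
swaps `a` and `b`, fixes the `p`-mean `M = ((a ^ p + b ^ p) / 2) ^ (1 / p)`, and preserves the
measure `x ^ (p - 1) dx = d(x ^ p) / p`. So `g = PSym p a b f` is `σ`-invariant and has the same
weighted integral as `f`. The `p`-convexity of `g` gives `f M = g M ≤ (g x + g (σ x)) / 2 = g x`
and `g x ≤ max (g a) (g b) = (f a + f b) / 2`; integrating against the weight, whose total mass
is `(b ^ p - a ^ p) / p`, yields both inequalities.
-/

variable {p a b x c : ℝ}

lemma rpow_mem_uIcc_rpow (ha : 0 < a) (hx : x ∈ Icc a b) : x ^ p ∈ uIcc (a ^ p) (b ^ p) := by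
  have hx0 : 0 < x := ha.trans_le hx.1
  rcases le_total 0 p with hp | hp
  · exact Or.inl ⟨rpow_le_rpow ha.le hx.1 hp, rpow_le_rpow hx0.le hx.2 hp⟩ |> mem_uIcc.2
  · exact Or.inr ⟨rpow_le_rpow_of_nonpos hx0 hx.2 hp, rpow_le_rpow_of_nonpos ha hx.1 hp⟩
      |> mem_uIcc.2

lemma add_sub_mem_uIcc {u v : ℝ} (hc : c ∈ uIcc u v) : u + v - c ∈ uIcc u v := by
  rw [mem_uIcc] at hc ⊢
  rcases hc with ⟨h₁, h₂⟩ | ⟨h₁, h₂⟩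
  · exact Or.inl ⟨by linarith, by linarith⟩
  · exact Or.inr ⟨by linarith, by linarith⟩

lemma pos_of_mem_uIcc {u v : ℝ} (hu : 0 < u) (hv : 0 < v) (hc : c ∈ uIcc u v) : 0 < c :=
  (lt_min hu hv).trans_le hc.1

lemma rpow_one_div_mem_Icc (hp : p ≠ 0) (ha : 0 < a) (hab : a ≤ b)
    (hc : c ∈ uIcc (a ^ p) (b ^ p)) : c ^ (1 / p) ∈ Icc a b := by
  have hcont : ContinuousOn (fun y : ℝ => y ^ p) (uIcc a b) := fun y hy =>
    (continuousAt_rpow_const _ _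
      (Or.inl (ha.trans_le (uIcc_of_le hab ▸ hy).1).ne')).continuousWithinAt
  obtain ⟨y, hy, rfl⟩ := intermediate_value_uIcc hcont hc
  rw [uIcc_of_le hab] at hy
  rwa [one_div, rpow_rpow_inv (ha.trans_le hy.1).le hp]

def pReflect (p a b x : ℝ) : ℝ := (a ^ p + b ^ p - x ^ p) ^ (1 / p)

lemma PSym_apply (f : ℝ → ℝ) : PSym p a b f x = (f x + f (pReflect p a b x)) / 2 := rfl

lemma add_rpow_sub_rpow_mem_uIcc (ha : 0 < a) (hx : x ∈ Icc a b) :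
    a ^ p + b ^ p - x ^ p ∈ uIcc (a ^ p) (b ^ p) :=
  add_sub_mem_uIcc (rpow_mem_uIcc_rpow ha hx)

lemma add_rpow_sub_rpow_pos (ha : 0 < a) (hx : x ∈ Icc a b) : 0 < a ^ p + b ^ p - x ^ p :=
  pos_of_mem_uIcc (rpow_pos_of_pos ha p) (rpow_pos_of_pos (ha.trans_le (hx.1.trans hx.2)) p)
    (add_rpow_sub_rpow_mem_uIcc ha hx)

lemma pReflect_rpow (hp : p ≠ 0) (ha : 0 < a) (hx : x ∈ Icc a b) :
    pReflect p a b x ^ p = a ^ p + b ^ p - x ^ p := by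
  rw [pReflect, one_div, rpow_inv_rpow (add_rpow_sub_rpow_pos ha hx).le hp]

lemma pReflect_mem_Icc (hp : p ≠ 0) (ha : 0 < a) (hx : x ∈ Icc a b) :
    pReflect p a b x ∈ Icc a b :=
  rpow_one_div_mem_Icc hp ha (hx.1.trans hx.2) (add_rpow_sub_rpow_mem_uIcc ha hx)

lemma pReflect_pReflect (hp : p ≠ 0) (ha : 0 < a) (hx : x ∈ Icc a b) :
    pReflect p a b (pReflect p a b x) = x := by
  rw [pReflect, pReflect_rpow hp ha hx, sub_sub_cancel, one_div,
    rpow_rpow_inv (ha.trans_le hx.1).le hp]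

lemma pReflect_left (hp : p ≠ 0) (hb : 0 ≤ b) : pReflect p a b a = b := by
  rw [pReflect, add_sub_cancel_left, one_div, rpow_rpow_inv hb hp]

lemma pReflect_right (hp : p ≠ 0) (ha : 0 ≤ a) : pReflect p a b b = a := by
  rw [pReflect, add_sub_cancel_right, one_div, rpow_rpow_inv ha hp]

lemma pReflect_pMean (hp : p ≠ 0) (ha : 0 < a) (hb : 0 < b) :
    pReflect p a b (((a ^ p + b ^ p) / 2) ^ (1 / p)) = ((a ^ p + b ^ p) / 2) ^ (1 / p) := by
  have hA : 0 ≤ (a ^ p + b ^ p) / 2 := by positivity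
  rw [pReflect, one_div, rpow_inv_rpow hA hp, sub_half]

lemma hasDerivAt_pReflect (hp : p ≠ 0) (ha : 0 < a) (hx : x ∈ Icc a b) :
    HasDerivAt (pReflect p a b)
      (-(x ^ (p - 1) * (a ^ p + b ^ p - x ^ p) ^ (1 / p - 1))) x := by
  have hinner := (hasDerivAt_rpow_const (p := p) (Or.inl (ha.trans_le hx.1).ne')).const_sub
    (a ^ p + b ^ p)
  refine ((hasDerivAt_rpow_const (p := 1 / p)
    (Or.inl (add_rpow_sub_rpow_pos ha hx).ne')).comp x hinner).congr_deriv ?_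
  field_simp

lemma rpow_mul_deriv_pReflect (hp : p ≠ 0) (ha : 0 < a) (hx : x ∈ Icc a b) :
    pReflect p a b x ^ (p - 1) * (x ^ (p - 1) * (a ^ p + b ^ p - x ^ p) ^ (1 / p - 1)) =
      x ^ (p - 1) := by
  have hu := add_rpow_sub_rpow_pos (p := p) ha hx
  rw [pReflect, ← rpow_mul hu.le, mul_left_comm, ← rpow_add hu,
    show 1 / p * (p - 1) + (1 / p - 1) = 0 by field_simp; ring, rpow_zero, mul_one]

lemma deriv_pReflect_nonpos (ha : 0 < a) (hx : x ∈ Icc a b) :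
    -(x ^ (p - 1) * (a ^ p + b ^ p - x ^ p) ^ (1 / p - 1)) ≤ 0 :=
  neg_nonpos.2 <| mul_nonneg (rpow_nonneg (ha.trans_le hx.1).le _)
    (rpow_nonneg (add_rpow_sub_rpow_pos ha hx).le _)

lemma continuousOn_pReflect (hp : p ≠ 0) (ha : 0 < a) (hab : a ≤ b) :
    ContinuousOn (pReflect p a b) (uIcc a b) := fun _ hx =>
  (hasDerivAt_pReflect hp ha (uIcc_of_le hab ▸ hx)).continuousAt.continuousWithinAt

lemma comp_pReflect_mul_rpow_eqOn (hp : p ≠ 0) (ha : 0 < a) (hab : a ≤ b) (h : ℝ → ℝ) :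
    EqOn (fun x => h (pReflect p a b x) * x ^ (p - 1))
      (fun x => -(((fun u => h u * u ^ (p - 1)) ∘ pReflect p a b) x *
        -(x ^ (p - 1) * (a ^ p + b ^ p - x ^ p) ^ (1 / p - 1)))) (uIcc a b) := fun x hx => by
  rw [uIcc_of_le hab] at hx
  simp only [Function.comp_apply, mul_neg, neg_neg, mul_assoc, rpow_mul_deriv_pReflect hp ha hx]

lemma integral_comp_pReflect_mul_rpow (hp : p ≠ 0) (ha : 0 < a) (hab : a ≤ b)
    (h : ℝ → ℝ) :
    ∫ x in a..b, h (pReflect p a b x) * x ^ (p - 1) = ∫ x in a..b, h x * x ^ (p - 1) := by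
  have hIoo : Ioo (min a b) (max a b) ⊆ Icc a b := uIcc_of_le hab ▸ Ioo_subset_Icc_self
  rw [integral_congr (comp_pReflect_mul_rpow_eqOn hp ha hab h), intervalIntegral.integral_neg,
    integral_comp_mul_deriv_of_deriv_nonpos (continuousOn_pReflect hp ha hab)
      (fun x hx => hasDerivAt_pReflect hp ha (hIoo hx))
      (fun x hx => deriv_pReflect_nonpos ha (hIoo hx)),
    pReflect_left hp (ha.le.trans hab), pReflect_right hp ha.le, integral_symm, neg_neg]

lemma IntervalIntegrable.comp_pReflect_mul_rpow (hp : p ≠ 0) (ha : 0 < a) (hab : a ≤ b)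
    {h : ℝ → ℝ} (hint : IntervalIntegrable (fun x => h x * x ^ (p - 1)) volume a b) :
    IntervalIntegrable (fun x => h (pReflect p a b x) * x ^ (p - 1)) volume a b := by
  have hIoo : Ioo (min a b) (max a b) ⊆ Icc a b := uIcc_of_le hab ▸ Ioo_subset_Icc_self
  have := (integrable_comp_mul_deriv_iff_of_deriv_nonpos (continuousOn_pReflect hp ha hab)
      (fun x hx => hasDerivAt_pReflect hp ha (hIoo hx))
      (fun x hx => deriv_pReflect_nonpos ha (hIoo hx))).2
    (by rw [pReflect_left hp (ha.le.trans hab), pReflect_right hp ha.le]; exact hint.symm)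
  exact this.neg.congr fun x hx =>
    (comp_pReflect_mul_rpow_eqOn hp ha hab h (uIoc_subset_uIcc hx)).symm

lemma PSym_pReflect (hp : p ≠ 0) (ha : 0 < a) (hx : x ∈ Icc a b) (f : ℝ → ℝ) :
    PSym p a b f (pReflect p a b x) = PSym p a b f x := by
  rw [PSym_apply, PSym_apply, pReflect_pReflect hp ha hx, add_comm]

lemma PSym_pMean (hp : p ≠ 0) (ha : 0 < a) (hb : 0 < b) (f : ℝ → ℝ) :
    PSym p a b f (((a ^ p + b ^ p) / 2) ^ (1 / p)) = f (((a ^ p + b ^ p) / 2) ^ (1 / p)) := by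
  rw [PSym_apply, pReflect_pMean hp ha hb, add_self_div_two]

lemma PSym_left (hp : p ≠ 0) (hb : 0 ≤ b) (f : ℝ → ℝ) :
    PSym p a b f a = (f a + f b) / 2 := by
  rw [PSym_apply, pReflect_left hp hb]

lemma PSym_right (hp : p ≠ 0) (ha : 0 ≤ a) (f : ℝ → ℝ) :
    PSym p a b f b = (f a + f b) / 2 := by
  rw [PSym_apply, pReflect_right hp ha, add_comm]

lemma PConvexOn.le_max {g : ℝ → ℝ} (hg : PConvexOn p a b g) (hp : p ≠ 0) (ha : 0 < a)
    (hx : x ∈ Icc a b) : g x ≤ max (g a) (g b) := by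
  have hab := hx.1.trans hx.2
  obtain ⟨s, t, hs, ht, hst, hxp⟩ := (segment_eq_uIcc (a ^ p) (b ^ p)).symm ▸
    rpow_mem_uIcc_rpow ha hx
  obtain rfl : t = 1 - s := by linarith
  have hconv := hg a (left_mem_Icc.2 hab) b (right_mem_Icc.2 hab) s ⟨hs, by linarith⟩
  rw [← smul_eq_mul, ← smul_eq_mul (1 - s), hxp, one_div,
    rpow_rpow_inv (ha.trans_le hx.1).le hp] at hconv
  exact hconv.trans (Convex.combo_le_max _ _ hs ht hst)

lemma PSym_le_of_pConvexOn {f : ℝ → ℝ} (hf : PConvexOn p a b (PSym p a b f)) (hp : p ≠ 0)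
    (ha : 0 < a) (hx : x ∈ Icc a b) : PSym p a b f x ≤ (f a + f b) / 2 := by
  simpa [PSym_left hp (ha.le.trans (hx.1.trans hx.2)), PSym_right hp ha.le] using
    hf.le_max hp ha hx

lemma le_PSym_of_pConvexOn {f : ℝ → ℝ} (hf : PConvexOn p a b (PSym p a b f)) (hp : p ≠ 0)
    (ha : 0 < a) (hx : x ∈ Icc a b) :
    f (((a ^ p + b ^ p) / 2) ^ (1 / p)) ≤ PSym p a b f x := by
  have hmid := hf x hx _ (pReflect_mem_Icc hp ha hx) (1 / 2) ⟨by norm_num, by norm_num⟩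
  rw [pReflect_rpow hp ha hx, PSym_pReflect hp ha hx,
    show 1 / 2 * x ^ p + (1 - 1 / 2) * (a ^ p + b ^ p - x ^ p) = (a ^ p + b ^ p) / 2 by ring,
    PSym_pMean hp ha (ha.trans_le (hx.1.trans hx.2))] at hmid
  linarith

lemma IntervalIntegrable.PSym_mul_rpow (hp : p ≠ 0) (ha : 0 < a) (hab : a ≤ b) {f : ℝ → ℝ}
    (hint : IntervalIntegrable (fun x => f x * x ^ (p - 1)) volume a b) :
    IntervalIntegrable (fun x => PSym p a b f x * x ^ (p - 1)) volume a b := by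
  simp only [PSym_apply, div_mul_eq_mul_div, add_mul]
  exact (hint.add (hint.comp_pReflect_mul_rpow hp ha hab)).div_const 2

lemma integral_PSym_mul_rpow (hp : p ≠ 0) (ha : 0 < a) (hab : a ≤ b) {f : ℝ → ℝ}
    (hint : IntervalIntegrable (fun x => f x * x ^ (p - 1)) volume a b) :
    ∫ x in a..b, PSym p a b f x * x ^ (p - 1) = ∫ x in a..b, f x * x ^ (p - 1) := by
  simp only [PSym_apply, div_mul_eq_mul_div, add_mul]
  rw [intervalIntegral.integral_div, integral_add hint (hint.comp_pReflect_mul_rpow hp ha hab),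
    integral_comp_pReflect_mul_rpow hp ha hab, add_self_div_two]

lemma integral_rpow_sub_one (hp : p ≠ 0) (ha : 0 < a) (hab : a ≤ b) :
    ∫ x in a..b, x ^ (p - 1) = (b ^ p - a ^ p) / p := by
  have h0 : (0 : ℝ) ∉ uIcc a b := notMem_uIcc_of_lt ha (ha.trans_le hab)
  rw [integral_rpow (Or.inr ⟨by contrapose! hp; linarith, h0⟩), sub_add_cancel]

lemma rpow_sub_rpow_div_pos (hp : p ≠ 0) (ha : 0 < a) (hab : a < b) :
    0 < (b ^ p - a ^ p) / p := by
  rcases hp.lt_or_gt with hp | hp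
  · exact div_pos_of_neg_of_neg (sub_neg.2 (rpow_lt_rpow_of_neg ha hab hp)) hp
  · exact div_pos (sub_pos.2 (rpow_lt_rpow ha.le hab hp)) hp

theorem hermite_hadamard_symmetrized_pconvex (p a b : ℝ) (hp : p ≠ 0)
    (ha : 0 < a) (hab : a < b) (f : ℝ → ℝ)
    (hf : PConvexOn p a b (PSym p a b f))
    (hint : IntervalIntegrable (fun x => f x * x ^ (p - 1)) volume a b) :
    f (((a ^ p + b ^ p) / 2) ^ (1/p)) ≤
        (p / (b ^ p - a ^ p)) * ∫ x in a..b, f x * x ^ (p - 1) ∧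
    (p / (b ^ p - a ^ p)) * ∫ x in a..b, f x * x ^ (p - 1) ≤ (f a + f b) / 2 := by
  have hw : IntervalIntegrable (fun x : ℝ => x ^ (p - 1)) volume a b :=
    intervalIntegral.intervalIntegrable_rpow (Or.inr (notMem_uIcc_of_lt ha (ha.trans hab)))
  have hw_nonneg : ∀ x ∈ Icc a b, 0 ≤ x ^ (p - 1) := fun x hx =>
    rpow_nonneg (ha.trans_le hx.1).le _
  have hsym := hint.PSym_mul_rpow hp ha hab.le
  have hmass := rpow_sub_rpow_div_pos hp ha hab
  rw [← integral_PSym_mul_rpow hp ha hab.le hint, ← inv_div (b ^ p - a ^ p) p, inv_mul_eq_div,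
    le_div_iff₀ hmass, div_le_iff₀ hmass,
    ← integral_rpow_sub_one hp ha hab.le, ← intervalIntegral.integral_const_mul,
    ← intervalIntegral.integral_const_mul]
  constructor
  · exact integral_mono_on hab.le (hw.const_mul _) hsym fun x hx =>
      mul_le_mul_of_nonneg_right (le_PSym_of_pConvexOn hf hp ha hx) (hw_nonneg x hx)
  · exact integral_mono_on hab.le hsym (hw.const_mul _) fun x hx =>
      mul_le_mul_of_nonneg_right (PSym_le_of_pConvexOn hf hp ha hx) (hw_nonneg x hx)
end
end

section
/- If f : [a,b] ⊆ (0,∞) → ℝ is symmetrized p-convex on [a,b] (p ≠ 0), then the infimum over x ∈ [a,b] of P_{(f;p)}(x) equals f(((a^p + b^p)/2)^(1/p)) and the supremum equals (f(a) + f(b))/2. -/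
noncomputable section
open Real Set MeasureTheory intervalIntegral

section Aux

variable {p a b : ℝ}

lemma rpow_mem_Icc' (hp : p ≠ 0) (ha : 0 < a) (hb : 0 < b) {x : ℝ} (hx : x ∈ Set.Icc a b) :
    x ^ p ∈ Set.Icc (min (a ^ p) (b ^ p)) (max (a ^ p) (b ^ p)) := by
  rcases hp.lt_or_gt with h | h
  · exact ⟨(min_le_right _ _).trans (Real.rpow_le_rpow_of_nonpos (ha.trans_le hx.1) hx.2 h.le),
      (Real.rpow_le_rpow_of_nonpos ha hx.1 h.le).trans (le_max_left _ _)⟩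
  · exact ⟨(min_le_left _ _).trans (Real.rpow_le_rpow ha.le hx.1 h.le),
      (Real.rpow_le_rpow (ha.le.trans hx.1) hx.2 h.le).trans (le_max_right _ _)⟩

lemma rpow_inv_mem_Icc' (hp : p ≠ 0) (ha : 0 < a) (hab : a < b) {u : ℝ}
    (hu : u ∈ Set.Icc (min (a ^ p) (b ^ p)) (max (a ^ p) (b ^ p))) :
    u ^ (1/p) ∈ Set.Icc a b := by
  have hb : 0 < b := ha.trans hab
  have hap : 0 < a ^ p := Real.rpow_pos_of_pos ha p
  have hbp : 0 < b ^ p := Real.rpow_pos_of_pos hb p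
  have hu0 : 0 < u := (lt_min hap hbp).trans_le hu.1
  rw [one_div]
  rcases hp.lt_or_gt with h | h
  · have hlt : b ^ p < a ^ p := Real.rpow_lt_rpow_of_neg ha hab h
    have h1 : b ^ p ≤ u := (min_eq_right hlt.le) ▸ hu.1
    have h2 : u ≤ a ^ p := (max_eq_left hlt.le) ▸ hu.2
    constructor
    · calc a = (a ^ p) ^ p⁻¹ := (Real.rpow_rpow_inv ha.le hp).symm
        _ ≤ u ^ p⁻¹ := Real.rpow_le_rpow_of_nonpos hu0 h2 (by
            exact inv_nonpos.mpr h.le)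
    · calc u ^ p⁻¹ ≤ (b ^ p) ^ p⁻¹ :=
            Real.rpow_le_rpow_of_nonpos hbp h1 (inv_nonpos.mpr h.le)
        _ = b := Real.rpow_rpow_inv hb.le hp
  · have hlt : a ^ p < b ^ p := Real.rpow_lt_rpow ha.le hab h
    have h1 : a ^ p ≤ u := (min_eq_left hlt.le) ▸ hu.1
    have h2 : u ≤ b ^ p := (max_eq_right hlt.le) ▸ hu.2
    constructor
    · calc a = (a ^ p) ^ p⁻¹ := (Real.rpow_rpow_inv ha.le hp).symm
        _ ≤ u ^ p⁻¹ := Real.rpow_le_rpow hap.le h1 (inv_nonneg.mpr h.le)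
    · calc u ^ p⁻¹ ≤ (b ^ p) ^ p⁻¹ := Real.rpow_le_rpow hu0.le h2 (inv_nonneg.mpr h.le)
        _ = b := Real.rpow_rpow_inv hb.le hp

end Aux

theorem psym_inf_sup (p a b : ℝ) (hp : p ≠ 0) (ha : 0 < a) (hab : a < b)
    (f : ℝ → ℝ) (hf : PConvexOn p a b (PSym p a b f)) :
    sInf (PSym p a b f '' Set.Icc a b) = f (((a ^ p + b ^ p) / 2) ^ (1/p)) ∧
    sSup (PSym p a b f '' Set.Icc a b) = (f a + f b) / 2 := by
  have hb : 0 < b := ha.trans hab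
  have hap : 0 < a ^ p := Real.rpow_pos_of_pos ha p
  have hbp : 0 < b ^ p := Real.rpow_pos_of_pos hb p
  set g := PSym p a b f with hg
  set m := ((a ^ p + b ^ p) / 2) ^ (1/p) with hmdef
  have hsum : min (a ^ p) (b ^ p) + max (a ^ p) (b ^ p) = a ^ p + b ^ p := min_add_max _ _
  have hminmax : min (a ^ p) (b ^ p) ≤ max (a ^ p) (b ^ p) := min_le_max
  -- m ∈ [a,b] and m ^ p = (a^p+b^p)/2
  have hmid_mem : (a ^ p + b ^ p) / 2 ∈
      Set.Icc (min (a ^ p) (b ^ p)) (max (a ^ p) (b ^ p)) := by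
    constructor <;> [linarith; linarith]
  have hm_mem : m ∈ Set.Icc a b := rpow_inv_mem_Icc' hp ha hab hmid_mem
  have hmp : m ^ p = (a ^ p + b ^ p) / 2 := by
    rw [hmdef, one_div]
    exact Real.rpow_inv_rpow (by positivity) hp
  -- value of g at m
  have hgm : g m = f m := by
    rw [hg]
    simp only [PSym, hmp]
    have : a ^ p + b ^ p - (a ^ p + b ^ p) / 2 = (a ^ p + b ^ p) / 2 := by ring
    rw [this, ← hmdef]
    ring
  -- values of g at a and b
  have hga : g a = (f a + f b) / 2 := by
    rw [hg]; simp only [PSym]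
    have : a ^ p + b ^ p - a ^ p = b ^ p := by ring
    rw [this, one_div, Real.rpow_rpow_inv hb.le hp]
  have hgb : g b = (f a + f b) / 2 := by
    rw [hg]; simp only [PSym]
    have : a ^ p + b ^ p - b ^ p = a ^ p := by ring
    rw [this, one_div, Real.rpow_rpow_inv ha.le hp]
    ring
  -- the reflection
  have hrefl : ∀ x ∈ Set.Icc a b,
      ((a ^ p + b ^ p - x ^ p) ^ (1/p)) ∈ Set.Icc a b ∧
      ((a ^ p + b ^ p - x ^ p) ^ (1/p)) ^ p = a ^ p + b ^ p - x ^ p := by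
    intro x hx
    have hxp := rpow_mem_Icc' hp ha hb hx
    have hbase : a ^ p + b ^ p - x ^ p ∈
        Set.Icc (min (a ^ p) (b ^ p)) (max (a ^ p) (b ^ p)) := by
      constructor
      · have := hxp.2; linarith
      · have := hxp.1; linarith
    have hpos : 0 < a ^ p + b ^ p - x ^ p := (lt_min hap hbp).trans_le hbase.1
    refine ⟨rpow_inv_mem_Icc' hp ha hab hbase, ?_⟩
    rw [one_div]
    exact Real.rpow_inv_rpow hpos.le hp
  -- symmetry of g
  have hsym : ∀ x ∈ Set.Icc a b, g ((a ^ p + b ^ p - x ^ p) ^ (1/p)) = g x := by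
    intro x hx
    have h := (hrefl x hx).2
    rw [hg]; simp only [PSym, h]
    have hxpos : 0 < x := ha.trans_le hx.1
    have : a ^ p + b ^ p - (a ^ p + b ^ p - x ^ p) = x ^ p := by ring
    rw [this, one_div, Real.rpow_rpow_inv hxpos.le hp]
    ring
  -- lower bound: f m ≤ g x
  have hlow : ∀ x ∈ Set.Icc a b, f m ≤ g x := by
    intro x hx
    obtain ⟨hymem, hyp⟩ := hrefl x hx
    have h := hf x hx _ hymem (1/2) (by norm_num)
    have harg : 1/2 * x ^ p + (1 - 1/2) * ((a ^ p + b ^ p - x ^ p) ^ (1/p)) ^ p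
        = (a ^ p + b ^ p) / 2 := by rw [hyp]; ring
    rw [harg, ← hmdef, hsym x hx] at h
    calc f m = g m := hgm.symm
      _ ≤ 1/2 * g x + (1 - 1/2) * g x := h
      _ = g x := by ring
  -- upper bound: g x ≤ (f a + f b)/2
  have hne : b ^ p - a ^ p ≠ 0 := by
    rcases hp.lt_or_gt with h | h
    · exact sub_ne_zero.mpr (Real.rpow_lt_rpow_of_neg ha hab h).ne
    · exact sub_ne_zero.mpr (Real.rpow_lt_rpow ha.le hab h).ne'
  have hhigh : ∀ x ∈ Set.Icc a b, g x ≤ (f a + f b) / 2 := by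
    intro x hx
    set t := (b ^ p - x ^ p) / (b ^ p - a ^ p) with ht
    have hxp := rpow_mem_Icc' hp ha hb hx
    have htmem : t ∈ Set.Icc (0:ℝ) 1 := by
      rcases hp.lt_or_gt with h | h
      · have hlt : b ^ p < a ^ p := Real.rpow_lt_rpow_of_neg ha hab h
        have h1 : b ^ p ≤ x ^ p := (min_eq_right hlt.le) ▸ hxp.1
        have h2 : x ^ p ≤ a ^ p := (max_eq_left hlt.le) ▸ hxp.2
        constructor
        · exact div_nonneg_iff.mpr (Or.inr ⟨by linarith, by linarith⟩)
        · rw [div_le_one_iff]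
          exact Or.inr (Or.inr ⟨by linarith, by linarith⟩)
      · have hlt : a ^ p < b ^ p := Real.rpow_lt_rpow ha.le hab h
        have h1 : a ^ p ≤ x ^ p := (min_eq_left hlt.le) ▸ hxp.1
        have h2 : x ^ p ≤ b ^ p := (max_eq_right hlt.le) ▸ hxp.2
        constructor
        · exact div_nonneg (by linarith) (by linarith)
        · exact (div_le_one (by linarith)).mpr (by linarith)
    have key : t * a ^ p + (1 - t) * b ^ p = x ^ p := by
      rw [ht]; field_simp; ring
    have h := hf a (Set.left_mem_Icc.mpr hab.le) b (Set.right_mem_Icc.mpr hab.le) t htmem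
    have hxpos : 0 < x := ha.trans_le hx.1
    rw [key, one_div, Real.rpow_rpow_inv hxpos.le hp] at h
    calc g x ≤ t * g a + (1 - t) * g b := h
      _ = (f a + f b) / 2 := by rw [hga, hgb]; ring
  constructor
  · refine IsLeast.csInf_eq ⟨⟨m, hm_mem, hgm⟩, ?_⟩
    rintro y ⟨x, hx, rfl⟩
    exact hlow x hx
  · refine IsGreatest.csSup_eq ⟨⟨a, Set.left_mem_Icc.mpr hab.le, hga⟩, ?_⟩
    rintro y ⟨x, hx, rfl⟩
    exact hhigh x hx
end
end

section
/- If f : [a,b] ⊆ (0,∞) → ℝ is symmetrized p-convex on [a,b] (p ≠ 0), then for any x,y ∈ [a,b] with x ≠ y: (1/2)[f(((x^p + y^p)/2)^(1/p)) + f((a^p + b^p - (x^p + y^p)/2)^(1/p))] ≤ (p/(2(y^p - x^p)))[∫_x^y f(t)·t^(p-1) dt + ∫_{(a^p+b^p-y^p)^(1/p)}^{(a^p+b^p-x^p)^(1/p)} f(t)·t^(p-1) dt] ≤ (1/4)[f(x) + f(y) + f((a^p + b^p - x^p)^(1/p)) + f((a^p + b^p - y^p)^(1/p))]. -/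
noncomputable section
open Real Set MeasureTheory intervalIntegral

/-! After the substitution `u = t ^ p`, the symmetrized transform becomes the function
`u ↦ P_{(f;p)}(u ^ (1/p))`, which is convex on `[a ^ p, b ^ p]`, and the weighted integrals
`∫ f t * t ^ (p - 1)` become `p⁻¹` times its plain integrals. The claim is then the classical
Hermite–Hadamard inequality on `[x ^ p, y ^ p]`, which follows by integrating
`2 h ((A + B) / 2) ≤ h t + h (A + B - t) ≤ h A + h B` over `[A, B]`. -/

lemma pos_of_mem_uIcc_s12 {α : Type*} [LinearOrder α] [Zero α] {a b u : α} (ha : 0 < a)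
    (hb : 0 < b) (hu : u ∈ uIcc a b) : 0 < u :=
  lt_of_lt_of_le (lt_min ha hb) hu.1

lemma add_sub_pos_of_mem_uIcc {α : Type*} [AddCommGroup α] [LinearOrder α] [IsOrderedAddMonoid α]
    {A B u : α} (hA : 0 < A) (hB : 0 < B) (hu : u ∈ uIcc A B) : 0 < A + B - u := by
  rcases le_total A B with h | h
  · rw [uIcc_of_le h] at hu
    exact sub_pos.2 (lt_add_of_pos_of_le hA hu.2)
  · rw [uIcc_of_ge h] at hu
    exact sub_pos.2 (lt_add_of_le_of_pos hu.2 hB)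

namespace Real

variable {p a b x u : ℝ}

lemma rpow_rpow_one_div (hx : 0 ≤ x) (hp : p ≠ 0) : (x ^ p) ^ (1 / p) = x := by
  rw [one_div, rpow_rpow_inv hx hp]

lemma rpow_one_div_rpow (hx : 0 ≤ x) (hp : p ≠ 0) : (x ^ (1 / p)) ^ p = x := by
  rw [one_div, rpow_inv_rpow hx hp]

lemma mapsTo_rpow_uIcc (ha : 0 < a) (hb : 0 < b) (p : ℝ) :
    MapsTo (· ^ p) (uIcc a b) (uIcc (a ^ p) (b ^ p)) := by
  rcases le_total 0 p with hp | hp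
  · exact ((monotoneOn_rpow_Ici_of_exponent_nonneg hp).mono
      fun t ht => mem_Ici.2 (pos_of_mem_uIcc_s12 ha hb ht).le).mapsTo_uIcc
  · exact ((antitoneOn_rpow_Ioi_of_exponent_nonpos hp).mono
      fun t ht => pos_of_mem_uIcc_s12 ha hb ht).mapsTo_uIcc

lemma rpow_mem_uIcc_of_mem_Icc (ha : 0 < a) (hab : a ≤ b) (hx : x ∈ Icc a b) (p : ℝ) :
    x ^ p ∈ uIcc (a ^ p) (b ^ p) :=
  mapsTo_rpow_uIcc ha (ha.trans_le hab) p (by rwa [uIcc_of_le hab])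

lemma rpow_one_div_mem_Icc (hp : p ≠ 0) (ha : 0 < a) (hab : a ≤ b)
    (hu : u ∈ uIcc (a ^ p) (b ^ p)) : u ^ (1 / p) ∈ Icc a b := by
  have hb := ha.trans_le hab
  have := mapsTo_rpow_uIcc (rpow_pos_of_pos ha p) (rpow_pos_of_pos hb p) (1 / p) hu
  rwa [rpow_rpow_one_div ha.le hp, rpow_rpow_one_div hb.le hp, uIcc_of_le hab] at this

lemma hasDerivAt_rpow_div_self (hp : p ≠ 0) (hx : 0 < x) :
    HasDerivAt (fun t => t ^ p / p) (x ^ (p - 1)) x := by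
  have := (hasDerivAt_rpow_const (p := p) (Or.inl hx.ne')).div_const p
  rwa [mul_div_cancel_left₀ _ hp] at this

end Real

lemma IntervalIntegrable.comp_add_sub {g : ℝ → ℝ} {A B : ℝ} (hg : IntervalIntegrable g volume A B) :
    IntervalIntegrable (fun t => g (A + B - t)) volume A B := by
  simpa using (hg.comp_sub_left (A + B)).symm

section RpowSubstitution

variable {p x y : ℝ}

-- Substituting `u = t ^ p / p`, whose derivative `t ^ (p - 1)` is positive whatever the sign of `p`.
lemma intervalIntegral.integral_comp_rpow_mul_rpow_sub_one (hp : p ≠ 0) (hx : 0 < x)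
    (hy : 0 < y) (F : ℝ → ℝ) :
    ∫ t in x..y, F (t ^ p) * t ^ (p - 1) = p⁻¹ * ∫ u in x ^ p..y ^ p, F u := by
  have hpos : ∀ t ∈ uIcc x y, 0 < t := fun t => pos_of_mem_uIcc_s12 hx hy
  have key := integral_comp_mul_deriv_of_deriv_nonneg (g := fun v => F (p * v))
    (f := fun t => t ^ p / p) (f' := fun t => t ^ (p - 1)) (a := x) (b := y)
    (fun t ht => (hasDerivAt_rpow_div_self hp (hpos t ht)).continuousAt.continuousWithinAt)
    (fun t ht => hasDerivAt_rpow_div_self hp (hpos t (Ioo_subset_Icc_self ht)))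
    (fun t ht => (rpow_pos_of_pos (hpos t (Ioo_subset_Icc_self ht)) _).le)
  simp only [Function.comp_def, mul_div_cancel₀ _ hp] at key
  rw [key, integral_comp_mul_left _ hp, smul_eq_mul, mul_div_cancel₀ _ hp,
    mul_div_cancel₀ _ hp]

lemma intervalIntegrable_comp_rpow_mul_rpow_sub_one_iff (hp : p ≠ 0) (hx : 0 < x)
    (hy : 0 < y) (F : ℝ → ℝ) :
    IntervalIntegrable (fun t => F (t ^ p) * t ^ (p - 1)) volume x y ↔
      IntervalIntegrable F volume (x ^ p) (y ^ p) := by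
  have hpos : ∀ t ∈ uIcc x y, 0 < t := fun t => pos_of_mem_uIcc_s12 hx hy
  have key := integrable_comp_mul_deriv_iff_of_deriv_nonneg (g := fun v => F (p * v))
    (f := fun t => t ^ p / p) (f' := fun t => t ^ (p - 1)) (a := x) (b := y)
    (fun t ht => (hasDerivAt_rpow_div_self hp (hpos t ht)).continuousAt.continuousWithinAt)
    (fun t ht => hasDerivAt_rpow_div_self hp (hpos t (Ioo_subset_Icc_self ht)))
    (fun t ht => (rpow_pos_of_pos (hpos t (Ioo_subset_Icc_self ht)) _).le)
  simp only [Function.comp_def, mul_div_cancel₀ _ hp] at key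
  rw [key, IntervalIntegrable.comp_mul_left_iff hp]

lemma intervalIntegral.integral_comp_rpow_one_div (hp : p ≠ 0) (hx : 0 < x) (hy : 0 < y)
    (f : ℝ → ℝ) :
    ∫ u in x ^ p..y ^ p, f (u ^ (1 / p)) = p * ∫ t in x..y, f t * t ^ (p - 1) := by
  have h := integral_comp_rpow_mul_rpow_sub_one hp hx hy (fun u => f (u ^ (1 / p)))
  rw [integral_congr fun t ht => by
    rw [Real.rpow_rpow_one_div (pos_of_mem_uIcc_s12 hx hy ht).le hp]] at h
  rw [h, mul_inv_cancel_left₀ hp]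

lemma intervalIntegrable_comp_rpow_one_div_iff (hp : p ≠ 0) (hx : 0 < x) (hy : 0 < y)
    (f : ℝ → ℝ) :
    IntervalIntegrable (fun u => f (u ^ (1 / p))) volume (x ^ p) (y ^ p) ↔
      IntervalIntegrable (fun t => f t * t ^ (p - 1)) volume x y := by
  rw [← intervalIntegrable_comp_rpow_mul_rpow_sub_one_iff hp hx hy]
  refine intervalIntegrable_congr fun t ht => ?_
  rw [Real.rpow_rpow_one_div (pos_of_mem_uIcc_s12 hx hy (uIoc_subset_uIcc ht)).le hp]

lemma intervalIntegral.integral_comp_sub_rpow_one_div (hp : p ≠ 0) {c : ℝ} (hx : 0 < c - x ^ p)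
    (hy : 0 < c - y ^ p) (f : ℝ → ℝ) :
    ∫ u in x ^ p..y ^ p, f ((c - u) ^ (1 / p)) =
      p * ∫ t in (c - y ^ p) ^ (1 / p)..(c - x ^ p) ^ (1 / p), f t * t ^ (p - 1) := by
  have := integral_comp_rpow_one_div hp (rpow_pos_of_pos hy (1 / p))
    (rpow_pos_of_pos hx (1 / p)) f
  rw [Real.rpow_one_div_rpow hy.le hp, Real.rpow_one_div_rpow hx.le hp] at this
  rw [integral_comp_sub_left (fun u => f (u ^ (1 / p))), this]

end RpowSubstitution

section HermiteHadamard

variable {h : ℝ → ℝ} {A B t : ℝ}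

lemma ConvexOn.two_mul_map_midpoint_le_add_map_reflect (hh : ConvexOn ℝ (Icc A B) h)
    (ht : t ∈ Icc A B) : 2 * h ((A + B) / 2) ≤ h t + h (A + B - t) := by
  have hrefl : A + B - t ∈ Icc A B := ⟨by linarith [ht.2], by linarith [ht.1]⟩
  have := hh.2 ht hrefl (by norm_num : (0 : ℝ) ≤ 1 / 2) (by norm_num : (0 : ℝ) ≤ 1 / 2)
    (by norm_num)
  simp only [smul_eq_mul] at this
  rw [show 1 / 2 * t + 1 / 2 * (A + B - t) = (A + B) / 2 by ring] at this
  linarith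

lemma ConvexOn.add_map_reflect_le (hh : ConvexOn ℝ (Icc A B) h) (ht : t ∈ Icc A B) :
    h t + h (A + B - t) ≤ h A + h B := by
  rcases (ht.1.trans ht.2).eq_or_lt with rfl | hAB
  · obtain rfl : t = A := le_antisymm ht.2 ht.1
    simp
  have hA : A ∈ Icc A B := left_mem_Icc.2 hAB.le
  have hB : B ∈ Icc A B := right_mem_Icc.2 hAB.le
  -- `t` and its reflection are the convex combinations of `A` and `B` with swapped weights
  set w := (B - t) / (B - A)
  have hw₀ : 0 ≤ w := div_nonneg (by linarith [ht.2]) (by linarith)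
  have hw₁ : 0 ≤ 1 - w := by
    rw [sub_nonneg, div_le_one (by linarith)]
    linarith [ht.1]
  have h₁ := hh.2 hA hB hw₀ hw₁ (add_sub_cancel w 1)
  have h₂ := hh.2 hA hB hw₁ hw₀ (sub_add_cancel 1 w)
  have e₁ : w • A + (1 - w) • B = t := by simp only [w, smul_eq_mul]; field_simp; ring
  have e₂ : (1 - w) • A + w • B = A + B - t := by simp only [w, smul_eq_mul]; field_simp; ring
  rw [e₁] at h₁
  rw [e₂] at h₂
  simp only [smul_eq_mul] at h₁ h₂
  linear_combination h₁ + h₂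

lemma intervalIntegral.integral_comp_add_sub (h : ℝ → ℝ) (A B : ℝ) :
    ∫ t in A..B, h (A + B - t) = ∫ t in A..B, h t := by
  simp [integral_comp_sub_left]

lemma ConvexOn.hermiteHadamard_of_lt (hh : ConvexOn ℝ (Icc A B) h)
    (hi : IntervalIntegrable h volume A B) (hAB : A < B) :
    h ((A + B) / 2) ≤ ⨍ t in A..B, h t ∧ ⨍ t in A..B, h t ≤ (h A + h B) / 2 := by
  have hsum := hi.add hi.comp_add_sub
  have hint : ∫ t in A..B, h t + h (A + B - t) = 2 * ∫ t in A..B, h t := by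
    rw [integral_add hi hi.comp_add_sub, integral_comp_add_sub]
    ring
  have lower := integral_mono_on hAB.le intervalIntegrable_const hsum
    fun t ht => hh.two_mul_map_midpoint_le_add_map_reflect ht
  have upper := integral_mono_on hAB.le hsum intervalIntegrable_const
    fun t ht => hh.add_map_reflect_le ht
  simp only [intervalIntegral.integral_const, smul_eq_mul, hint] at lower upper
  have hBA : 0 < B - A := sub_pos.2 hAB
  rw [interval_average_eq_div, le_div_iff₀ hBA, div_le_iff₀ hBA]
  constructor <;> linarith

theorem ConvexOn.hermiteHadamard (hh : ConvexOn ℝ (uIcc A B) h)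
    (hi : IntervalIntegrable h volume A B) (hAB : A ≠ B) :
    h ((A + B) / 2) ≤ ⨍ t in A..B, h t ∧ ⨍ t in A..B, h t ≤ (h A + h B) / 2 := by
  rcases hAB.lt_or_gt with hlt | hgt
  · rw [uIcc_of_le hlt.le] at hh
    exact hh.hermiteHadamard_of_lt hi hlt
  · rw [uIcc_of_ge hgt.le] at hh
    rw [interval_average_symm, add_comm A, add_comm (h A)]
    exact hh.hermiteHadamard_of_lt hi.symm hgt

end HermiteHadamard

section SymmetrizedTransform

variable {p a b x y : ℝ} {f : ℝ → ℝ}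

lemma pSym_rpow_one_div (hp : p ≠ 0) {u : ℝ} (hu : 0 ≤ u) (f : ℝ → ℝ) :
    PSym p a b f (u ^ (1 / p)) = (f (u ^ (1 / p)) + f ((a ^ p + b ^ p - u) ^ (1 / p))) / 2 := by
  rw [PSym, Real.rpow_one_div_rpow hu hp]

theorem PConvexOn.convexOn_comp_rpow_one_div {g : ℝ → ℝ} (hp : p ≠ 0) (ha : 0 < a)
    (hab : a ≤ b) (hg : PConvexOn p a b g) :
    ConvexOn ℝ (uIcc (a ^ p) (b ^ p)) fun u => g (u ^ (1 / p)) := by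
  have hpos : ∀ u ∈ uIcc (a ^ p) (b ^ p), 0 < u := fun u =>
    pos_of_mem_uIcc_s12 (rpow_pos_of_pos ha p) (rpow_pos_of_pos (ha.trans_le hab) p)
  refine ⟨convex_uIcc _ _, fun u hu v hv s t hs ht hst => ?_⟩
  obtain rfl : t = 1 - s := by linarith
  have := hg _ (Real.rpow_one_div_mem_Icc hp ha hab hu) _ (Real.rpow_one_div_mem_Icc hp ha hab hv)
    s ⟨hs, by linarith⟩
  rwa [Real.rpow_one_div_rpow (hpos u hu).le hp, Real.rpow_one_div_rpow (hpos v hv).le hp] at this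

lemma intervalIntegrable_pSym_comp_rpow_one_div (hp : p ≠ 0) (ha : 0 < a) (hab : a ≤ b)
    (hint : IntervalIntegrable (fun t => f t * t ^ (p - 1)) volume a b) :
    IntervalIntegrable (fun u => PSym p a b f (u ^ (1 / p))) volume (a ^ p) (b ^ p) := by
  have hb := ha.trans_le hab
  have hF := (intervalIntegrable_comp_rpow_one_div_iff hp ha hb f).2 hint
  refine (intervalIntegrable_congr fun u hu => ?_).1 ((hF.add hF.comp_add_sub).div_const 2)
  exact (pSym_rpow_one_div hp (pos_of_mem_uIcc_s12 (rpow_pos_of_pos ha p)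
    (rpow_pos_of_pos hb p) (uIoc_subset_uIcc hu)).le f).symm

lemma integral_pSym_comp_rpow_one_div (hp : p ≠ 0) (ha : 0 < a) (hab : a ≤ b)
    (hint : IntervalIntegrable (fun t => f t * t ^ (p - 1)) volume a b)
    (hx : x ∈ Icc a b) (hy : y ∈ Icc a b) :
    ∫ u in x ^ p..y ^ p, PSym p a b f (u ^ (1 / p)) =
      p / 2 * ((∫ t in x..y, f t * t ^ (p - 1)) +
        ∫ t in (a ^ p + b ^ p - y ^ p) ^ (1 / p)..(a ^ p + b ^ p - x ^ p) ^ (1 / p),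
          f t * t ^ (p - 1)) := by
  have hb := ha.trans_le hab
  have hmem := fun z (hz : z ∈ Icc a b) => Real.rpow_mem_uIcc_of_mem_Icc ha hab hz p
  have hsub := uIcc_subset_uIcc (hmem x hx) (hmem y hy)
  have hrefl : ∀ z ∈ Icc a b, 0 < a ^ p + b ^ p - z ^ p := fun z hz =>
    add_sub_pos_of_mem_uIcc (rpow_pos_of_pos ha p) (rpow_pos_of_pos hb p) (hmem z hz)
  have hF := (intervalIntegrable_comp_rpow_one_div_iff hp ha hb f).2 hint
  rw [integral_congr fun u hu => pSym_rpow_one_div hp (pos_of_mem_uIcc_s12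
      (rpow_pos_of_pos ha p) (rpow_pos_of_pos hb p) (hsub hu)).le f,
    intervalIntegral.integral_div, integral_add (hF.mono_set hsub) (hF.comp_add_sub.mono_set hsub),
    integral_comp_rpow_one_div hp (ha.trans_le hx.1) (ha.trans_le hy.1),
    integral_comp_sub_rpow_one_div hp (hrefl x hx) (hrefl y hy)]
  ring

end SymmetrizedTransform

theorem hermite_hadamard_subinterval (p a b : ℝ) (hp : p ≠ 0) (ha : 0 < a)
    (hab : a < b) (f : ℝ → ℝ) (hf : PConvexOn p a b (PSym p a b f))
    (hint : IntervalIntegrable (fun t => f t * t ^ (p - 1)) volume a b) :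
    ∀ x ∈ Set.Icc a b, ∀ y ∈ Set.Icc a b, x ≠ y →
      (1/2) * (f (((x ^ p + y ^ p) / 2) ^ (1/p)) +
          f ((a ^ p + b ^ p - (x ^ p + y ^ p) / 2) ^ (1/p))) ≤
        (p / (2 * (y ^ p - x ^ p))) *
          ((∫ t in x..y, f t * t ^ (p - 1)) +
            ∫ t in ((a ^ p + b ^ p - y ^ p) ^ (1/p))..((a ^ p + b ^ p - x ^ p) ^ (1/p)),
              f t * t ^ (p - 1)) ∧
      (p / (2 * (y ^ p - x ^ p))) *
          ((∫ t in x..y, f t * t ^ (p - 1)) +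
            ∫ t in ((a ^ p + b ^ p - y ^ p) ^ (1/p))..((a ^ p + b ^ p - x ^ p) ^ (1/p)),
              f t * t ^ (p - 1)) ≤
        (1/4) * (f x + f y + f ((a ^ p + b ^ p - x ^ p) ^ (1/p)) +
          f ((a ^ p + b ^ p - y ^ p) ^ (1/p))) := by
  intro x hx y hy hxy
  have hx₀ : 0 < x := ha.trans_le hx.1
  have hy₀ : 0 < y := ha.trans_le hy.1
  have hsub := uIcc_subset_uIcc (Real.rpow_mem_uIcc_of_mem_Icc ha hab.le hx p)
    (Real.rpow_mem_uIcc_of_mem_Icc ha hab.le hy p)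
  have hxy' : x ^ p ≠ y ^ p := fun h => hxy ((Real.rpow_left_inj hx₀.le hy₀.le hp).1 h)
  obtain ⟨hleft, hright⟩ :=
    ((hf.convexOn_comp_rpow_one_div hp ha hab.le).subset hsub (convex_uIcc _ _)).hermiteHadamard
      ((intervalIntegrable_pSym_comp_rpow_one_div hp ha hab.le hint).mono_set hsub) hxy'
  rw [interval_average_eq_div, integral_pSym_comp_rpow_one_div hp ha hab.le hint hx hy]
    at hleft hright
  rw [pSym_rpow_one_div hp (by positivity)] at hleft
  rw [Real.rpow_rpow_one_div hx₀.le hp, Real.rpow_rpow_one_div hy₀.le hp] at hright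
  rw [mul_comm 2 (y ^ p - x ^ p), ← div_div]
  constructor
  · convert hleft using 1 <;> ring
  · convert hright using 1
    · ring
    · simp only [PSym]
      ring
end
end

section
/- If f : [a,b] ⊆ (0,∞) → ℝ is p-convex (p ≠ 0), then for any x,y ∈ [a,b]: f(((a^p + b^p)/2)^(1/p)) ≤ (1/2)[f(((x^p + y^p)/2)^(1/p)) + f((a^p + b^p - (x^p + y^p)/2)^(1/p))]. -/
noncomputable section
open Real Set MeasureTheory intervalIntegral

lemma aux_mem_pos (p a b z : ℝ) (hp : 0 < p) (ha : 0 < a) (hb : 0 < b)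
    (h1 : a ^ p ≤ z) (h2 : z ≤ b ^ p) :
    z ^ (1/p) ∈ Set.Icc a b ∧ (z ^ (1/p)) ^ p = z := by
  have hz : 0 < z := lt_of_lt_of_le (Real.rpow_pos_of_pos ha p) h1
  rw [one_div]
  refine ⟨⟨?_, ?_⟩, Real.rpow_inv_rpow hz.le hp.ne'⟩
  · calc a = (a ^ p) ^ p⁻¹ := (Real.rpow_rpow_inv ha.le hp.ne').symm
      _ ≤ z ^ p⁻¹ := Real.rpow_le_rpow (by positivity) h1 (by positivity)
  · calc z ^ p⁻¹ ≤ (b ^ p) ^ p⁻¹ := Real.rpow_le_rpow hz.le h2 (by positivity)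
      _ = b := Real.rpow_rpow_inv hb.le hp.ne'

lemma aux_mem_neg (p a b z : ℝ) (hp : p < 0) (ha : 0 < a) (hb : 0 < b)
    (h1 : b ^ p ≤ z) (h2 : z ≤ a ^ p) :
    z ^ (1/p) ∈ Set.Icc a b ∧ (z ^ (1/p)) ^ p = z := by
  have hz : 0 < z := lt_of_lt_of_le (Real.rpow_pos_of_pos hb p) h1
  rw [one_div]
  refine ⟨⟨?_, ?_⟩, Real.rpow_inv_rpow hz.le hp.ne⟩
  · calc a = (a ^ p) ^ p⁻¹ := (Real.rpow_rpow_inv ha.le hp.ne).symm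
      _ ≤ z ^ p⁻¹ := Real.rpow_le_rpow_of_nonpos hz h2 (inv_nonpos.mpr hp.le)
  · calc z ^ p⁻¹ ≤ (b ^ p) ^ p⁻¹ :=
        Real.rpow_le_rpow_of_nonpos (Real.rpow_pos_of_pos hb p) h1 (inv_nonpos.mpr hp.le)
      _ = b := Real.rpow_rpow_inv hb.le hp.ne

theorem pconvex_midpoint_refinement (p a b : ℝ) (hp : p ≠ 0) (ha : 0 < a)
    (hab : a < b) (f : ℝ → ℝ) (hf : PConvexOn p a b f) :
    ∀ x ∈ Set.Icc a b, ∀ y ∈ Set.Icc a b,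
      f (((a ^ p + b ^ p) / 2) ^ (1/p)) ≤
        (1/2) * (f (((x ^ p + y ^ p) / 2) ^ (1/p)) +
          f ((a ^ p + b ^ p - (x ^ p + y ^ p) / 2) ^ (1/p))) := by
  intro x hx y hy
  have hb : 0 < b := ha.trans hab
  have hx0 : 0 < x := lt_of_lt_of_le ha hx.1
  have hy0 : 0 < y := lt_of_lt_of_le ha hy.1
  set A : ℝ := (x ^ p + y ^ p) / 2 with hA
  set B : ℝ := a ^ p + b ^ p - A with hB
  have key : A ^ (1/p) ∈ Set.Icc a b ∧ (A ^ (1/p)) ^ p = A ∧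
      B ^ (1/p) ∈ Set.Icc a b ∧ (B ^ (1/p)) ^ p = B := by
    rcases hp.lt_or_gt with hneg | hpos
    · have hxb : b ^ p ≤ x ^ p := Real.rpow_le_rpow_of_nonpos hx0 hx.2 hneg.le
      have hxa : x ^ p ≤ a ^ p := Real.rpow_le_rpow_of_nonpos ha hx.1 hneg.le
      have hyb : b ^ p ≤ y ^ p := Real.rpow_le_rpow_of_nonpos hy0 hy.2 hneg.le
      have hya : y ^ p ≤ a ^ p := Real.rpow_le_rpow_of_nonpos ha hy.1 hneg.le
      have h1 := aux_mem_neg p a b A hneg ha hb (by rw [hA]; linarith) (by rw [hA]; linarith)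
      have h2 := aux_mem_neg p a b B hneg ha hb (by rw [hB, hA]; linarith)
        (by rw [hB, hA]; linarith)
      exact ⟨h1.1, h1.2, h2.1, h2.2⟩
    · have hxb : x ^ p ≤ b ^ p := Real.rpow_le_rpow hx0.le hx.2 hpos.le
      have hxa : a ^ p ≤ x ^ p := Real.rpow_le_rpow ha.le hx.1 hpos.le
      have hyb : y ^ p ≤ b ^ p := Real.rpow_le_rpow hy0.le hy.2 hpos.le
      have hya : a ^ p ≤ y ^ p := Real.rpow_le_rpow ha.le hy.1 hpos.le
      have h1 := aux_mem_pos p a b A hpos ha hb (by rw [hA]; linarith) (by rw [hA]; linarith)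
      have h2 := aux_mem_pos p a b B hpos ha hb (by rw [hB, hA]; linarith)
        (by rw [hB, hA]; linarith)
      exact ⟨h1.1, h1.2, h2.1, h2.2⟩
  obtain ⟨huA, hpA, huB, hpB⟩ := key
  have := hf (A ^ (1/p)) huA (B ^ (1/p)) huB (1/2) (by norm_num)
  rw [hpA, hpB] at this
  have harg : (1:ℝ)/2 * A + (1 - 1/2) * B = (a ^ p + b ^ p) / 2 := by
    rw [hB]; ring
  rw [harg] at this
  calc f (((a ^ p + b ^ p) / 2) ^ (1/p)) ≤ 1/2 * f (A ^ (1/p)) + (1 - 1/2) * f (B ^ (1/p)) :=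
      this
    _ = (1/2) * (f (A ^ (1/p)) + f (B ^ (1/p))) := by ring
end
end

section
/- If f : [a,b] ⊆ (0,∞) → ℝ is p-convex with p ≠ 0 and integrable on [a,b], then f(((a^p + b^p)/2)^(1/p)) ≤ (p/(b^p - a^p)) ∫_a^b f(x)·x^(p-1) dx ≤ (f(a) + f(b))/2. -/
noncomputable section
open Real Set MeasureTheory intervalIntegral

/-! The substitution `v = x ^ p / p`, increasing for either sign of `p` since its derivative is
`x ^ (p - 1)`, turns `f` into `g v = f ((p * v) ^ (1 / p))`, which is convex on
`[a ^ p / p, b ^ p / p]` precisely because `f` is p-convex, and turns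
`p / (b ^ p - a ^ p) * ∫ x in a..b, f x * x ^ (p - 1)` into the average of `g` over that interval.
What remains is the classical Hermite–Hadamard inequality, obtained by averaging
`g ((A + B) / 2) ≤ (g x + g (A + B - x)) / 2 ≤ (g A + g B) / 2` over `x ∈ [A, B]`. -/

open scoped Interval

namespace ConvexOn

variable {g : ℝ → ℝ} {A B x : ℝ}

lemma map_midpoint_le_mean_reflect (hg : ConvexOn ℝ (Icc A B) g) (hx : x ∈ Icc A B) :
    g ((A + B) / 2) ≤ (g x + g (A + B - x)) / 2 := by
  have hx' : A + B - x ∈ Icc A B := ⟨by linarith [hx.2], by linarith [hx.1]⟩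
  have key := hg.2 hx hx' (by norm_num : (0 : ℝ) ≤ 1 / 2) (by norm_num : (0 : ℝ) ≤ 1 / 2)
    (by norm_num)
  calc g ((A + B) / 2) = g ((1 / 2 : ℝ) • x + (1 / 2 : ℝ) • (A + B - x)) := by
        simp only [smul_eq_mul]; ring_nf
    _ ≤ _ := key
    _ = _ := by simp only [smul_eq_mul]; ring

lemma map_add_map_reflect_le (hg : ConvexOn ℝ (Icc A B) g) (hAB : A ≤ B) (hx : x ∈ Icc A B) :
    g x + g (A + B - x) ≤ g A + g B := by
  rw [← segment_eq_Icc hAB] at hx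
  obtain ⟨s, t, hs, ht, hst, rfl⟩ := hx
  have hA := left_mem_Icc.2 hAB
  have hB := right_mem_Icc.2 hAB
  have hreflect : A + B - (s • A + t • B) = t • A + s • B := by
    simp only [smul_eq_mul]
    linear_combination (-(A + B)) * hst
  have h₁ := hg.2 hA hB hs ht hst
  have h₂ := hg.2 hA hB ht hs (by linarith)
  rw [hreflect]
  simp only [smul_eq_mul] at h₁ h₂ ⊢
  linear_combination h₁ + h₂ + (g A + g B) * hst

theorem hermite_hadamard (hg : ConvexOn ℝ (Icc A B) g) (hAB : A < B)
    (hint : IntervalIntegrable g volume A B) :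
    g ((A + B) / 2) ≤ ⨍ x in A..B, g x ∧ ⨍ x in A..B, g x ≤ (g A + g B) / 2 := by
  have hreflect : IntervalIntegrable (fun x => g (A + B - x)) volume A B := by
    simpa using (hint.comp_sub_left (A + B)).symm
  have hsym : IntervalIntegrable (fun x => (g x + g (A + B - x)) / 2) volume A B :=
    (hint.add hreflect).div_const 2
  have havg : ⨍ x in A..B, g x = (B - A)⁻¹ * ∫ x in A..B, (g x + g (A + B - x)) / 2 := by
    rw [interval_average_eq, smul_eq_mul, intervalIntegral.integral_div, integral_add hint hreflect,
      integral_comp_sub_left (fun x => g x) (A + B)]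
    simp only [add_sub_cancel_right, add_sub_cancel_left]
    ring
  have hlow := integral_mono_on hAB.le intervalIntegrable_const hsym
    fun _ hx => hg.map_midpoint_le_mean_reflect hx
  have hupp := integral_mono_on hAB.le hsym intervalIntegrable_const
    fun _ hx => div_le_div_of_nonneg_right (hg.map_add_map_reflect_le hAB.le hx) zero_le_two
  rw [intervalIntegral.integral_const, smul_eq_mul] at hlow hupp
  rw [havg, le_inv_mul_iff₀ (sub_pos.2 hAB), inv_mul_le_iff₀ (sub_pos.2 hAB)]
  exact ⟨hlow, hupp⟩

end ConvexOn

section PowerSubstitution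

variable {p : ℝ}

lemma hasDerivAt_rpow_div_self (hp : p ≠ 0) {x : ℝ} (hx : x ≠ 0) :
    HasDerivAt (fun x : ℝ => x ^ p / p) (x ^ (p - 1)) x := by
  simpa only [mul_div_cancel_left₀ _ hp] using
    (hasDerivAt_rpow_const (p := p) (Or.inl hx)).div_const p

lemma continuousOn_rpow_div_self (hp : p ≠ 0) : ContinuousOn (fun x : ℝ => x ^ p / p) (Ioi 0) :=
  fun _ hx => (hasDerivAt_rpow_div_self hp (ne_of_gt hx)).continuousAt.continuousWithinAt

lemma strictMonoOn_rpow_div_self (hp : p ≠ 0) : StrictMonoOn (fun x : ℝ => x ^ p / p) (Ioi 0) :=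
  strictMonoOn_of_deriv_pos (convex_Ioi 0) (continuousOn_rpow_div_self hp) fun x hx => by
    rw [interior_Ioi] at hx
    rw [(hasDerivAt_rpow_div_self hp (ne_of_gt hx)).deriv]
    exact rpow_pos_of_pos hx _

lemma mul_rpow_div_self_rpow_one_div (hp : p ≠ 0) {x : ℝ} (hx : 0 ≤ x) :
    (p * (x ^ p / p)) ^ (1 / p) = x := by
  rw [mul_div_cancel₀ _ hp, one_div, rpow_rpow_inv hx hp]

theorem PConvexOn.convexOn_comp {a b : ℝ} {f : ℝ → ℝ} (hf : PConvexOn p a b f) (hp : p ≠ 0)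
    (ha : 0 < a) (hab : a ≤ b) :
    ConvexOn ℝ (Icc (a ^ p / p) (b ^ p / p)) fun v => f ((p * v) ^ (1 / p)) := by
  have hsurj : ∀ v ∈ Icc (a ^ p / p) (b ^ p / p), ∃ x ∈ Icc a b, x ^ p / p = v := fun v hv =>
    intermediate_value_Icc hab ((continuousOn_rpow_div_self hp).mono
      fun x hx => ha.trans_le hx.1) hv
  refine ⟨convex_Icc _ _, fun v hv w hw s t hs ht hst => ?_⟩
  obtain ⟨x, hx, rfl⟩ := hsurj v hv
  obtain ⟨y, hy, rfl⟩ := hsurj w hw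
  obtain rfl : t = 1 - s := by linarith
  have hcomb : p * (s * (x ^ p / p) + (1 - s) * (y ^ p / p)) = s * x ^ p + (1 - s) * y ^ p := by
    field_simp
  simp only [smul_eq_mul, hcomb, mul_rpow_div_self_rpow_one_div hp (ha.le.trans hx.1),
    mul_rpow_div_self_rpow_one_div hp (ha.le.trans hy.1)]
  exact hf x hx y hy s ⟨hs, by linarith⟩

theorem intervalIntegral.integral_mul_rpow_sub_one (hp : p ≠ 0) {a b : ℝ} (ha : 0 < a)
    (hb : 0 < b) (f : ℝ → ℝ) :
    ∫ x in a..b, f x * x ^ (p - 1) = ∫ v in a ^ p / p..b ^ p / p, f ((p * v) ^ (1 / p)) := by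
  have hpos : [[a, b]] ⊆ Ioi 0 := fun _ hx => (lt_min ha hb).trans_le hx.1
  rw [← integral_comp_mul_deriv_of_deriv_nonneg
    ((continuousOn_rpow_div_self hp).mono hpos)
    (fun _ hx => hasDerivAt_rpow_div_self hp (hpos (Ioo_subset_Icc_self hx)).ne')
    (fun _ hx => (rpow_pos_of_pos (hpos (Ioo_subset_Icc_self hx)) _).le)]
  refine integral_congr fun x hx => ?_
  simp only [Function.comp_apply, mul_rpow_div_self_rpow_one_div hp (hpos hx).le]

theorem intervalIntegrable_mul_rpow_sub_one_iff (hp : p ≠ 0) {a b : ℝ} (ha : 0 < a)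
    (hb : 0 < b) (f : ℝ → ℝ) :
    IntervalIntegrable (fun x => f x * x ^ (p - 1)) volume a b ↔
      IntervalIntegrable (fun v => f ((p * v) ^ (1 / p))) volume (a ^ p / p) (b ^ p / p) := by
  have hpos : [[a, b]] ⊆ Ioi 0 := fun _ hx => (lt_min ha hb).trans_le hx.1
  rw [← integrable_comp_mul_deriv_iff_of_deriv_nonneg
    ((continuousOn_rpow_div_self hp).mono hpos)
    (fun _ hx => hasDerivAt_rpow_div_self hp (hpos (Ioo_subset_Icc_self hx)).ne')
    (fun _ hx => (rpow_pos_of_pos (hpos (Ioo_subset_Icc_self hx)) _).le)]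
  refine ⟨IntervalIntegrable.congr fun x hx => ?_, IntervalIntegrable.congr fun x hx => ?_⟩ <;>
    simp only [Function.comp_apply,
      mul_rpow_div_self_rpow_one_div hp (hpos (uIoc_subset_uIcc hx)).le]

end PowerSubstitution

theorem hermite_hadamard_pconvex (p a b : ℝ) (hp : p ≠ 0) (ha : 0 < a)
    (hab : a < b) (f : ℝ → ℝ) (hf : PConvexOn p a b f)
    (hint : IntervalIntegrable (fun x => f x * x ^ (p - 1)) volume a b) :
    f (((a ^ p + b ^ p) / 2) ^ (1/p)) ≤
        (p / (b ^ p - a ^ p)) * ∫ x in a..b, f x * x ^ (p - 1) ∧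
    (p / (b ^ p - a ^ p)) * ∫ x in a..b, f x * x ^ (p - 1) ≤ (f a + f b) / 2 := by
  have hb : 0 < b := ha.trans hab
  have hmono : a ^ p / p < b ^ p / p := strictMonoOn_rpow_div_self hp ha hb hab
  have havg : p / (b ^ p - a ^ p) * ∫ x in a..b, f x * x ^ (p - 1) =
      ⨍ v in a ^ p / p..b ^ p / p, f ((p * v) ^ (1 / p)) := by
    rw [interval_average_eq, smul_eq_mul, integral_mul_rpow_sub_one hp ha hb, ← sub_div, inv_div]
  have hmid : p * ((a ^ p / p + b ^ p / p) / 2) = (a ^ p + b ^ p) / 2 := by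
    field_simp
  have hHH := (hf.convexOn_comp hp ha hab.le).hermite_hadamard hmono
    ((intervalIntegrable_mul_rpow_sub_one_iff hp ha hb f).1 hint)
  rw [hmid, mul_rpow_div_self_rpow_one_div hp ha.le, mul_rpow_div_self_rpow_one_div hp hb.le]
    at hHH
  rwa [havg]
end
end
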